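/- Let M be a matroid on a finite linearly ordered ground set E and let B be a basis of M. For a subset X ⊆ Int(B), write F(X) for the unique subset of E such that B ∩ F(X) is a basis of M(F(X)), Int_{M(F(X))}(B ∩ F(X)) = Int_M(B) \ X, Ext_{M(F(X))}(B ∩ F(X)) = Ext_M(B), Int_{M/F(X)}(B \ F(X)) = X, and Ext_{M/F(X)}(B \ F(X)) = ∅. Let X = Y ⊎ Z be a partition of X. Then Z ⊆ Int_{M(F(Y))}(B ∩ F(Y)), and F(X) equals the subset obtained by applying the same unique-subset construction to the subset Z relative to the basis B ∩ F(Y) of the restriction M(F(Y)). -/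

import Mathlib

open Matroid Set

namespace ActiveBij

variable {α : Type*}

/-- Deletion of a set of elements from a matroid. -/
def del (M : Matroid α) (D : Set α) : Matroid α := M ↾ (M.E \ D)

/-- Contraction of a set of elements of a matroid. -/
def con (M : Matroid α) (C : Set α) : Matroid α := (del M✶ C)✶

/-- The minor `M(G)/F` : restriction to `G` followed by contraction of `F`. -/
def minor (M : Matroid α) (G F : Set α) : Matroid α := con (M ↾ G) F

/-- A circuit of a matroid : a minimal dependent set. -/
def Cct (M : Matroid α) (C : Set α) : Prop := Minimal M.Dep C

/-- A cocircuit of a matroid : a circuit of the dual. -/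
def Cocct (M : Matroid α) (C : Set α) : Prop := Cct M✶ C

/-- The fundamental circuit of `e ∉ B` with respect to a base `B` :
the unique circuit contained in `B ∪ {e}`. -/
def fundCct (M : Matroid α) (B : Set α) (e : α) : Set α :=
  ⋂₀ {C | Cct M C ∧ C ⊆ insert e B}

/-- The fundamental cocircuit of `b ∈ B` with respect to a base `B` :
the unique cocircuit contained in `(E \ B) ∪ {b}`. -/
def fundCocct (M : Matroid α) (B : Set α) (b : α) : Set α :=
  ⋂₀ {C | Cocct M C ∧ C ⊆ insert b (M.E \ B)}

/-- The set of internally active elements of a base `B` :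
elements `b ∈ B` that are the minimum of their fundamental cocircuit. -/
def ActInt [LinearOrder α] (M : Matroid α) (B : Set α) : Set α :=
  {b ∈ B | IsLeast (fundCocct M B b) b}

/-- The set of externally active elements of a base `B` :
elements `e ∈ M.E \ B` that are the minimum of their fundamental circuit. -/
def ActExt [LinearOrder α] (M : Matroid α) (B : Set α) : Set α :=
  {e ∈ M.E \ B | IsLeast (fundCct M B e) e}

/-- A uniactive internal base : internal activity `1` and external activity `0`. -/
def UIntBase [LinearOrder α] (M : Matroid α) (B : Set α) : Prop :=
  M.IsBase B ∧ (ActInt M B).ncard = 1 ∧ (ActExt M B).ncard = 0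

/-- A uniactive external base : internal activity `0` and external activity `1`. -/
def UExtBase [LinearOrder α] (M : Matroid α) (B : Set α) : Prop :=
  M.IsBase B ∧ (ActInt M B).ncard = 0 ∧ (ActExt M B).ncard = 1

/-- `β(M)` : the number of uniactive internal bases. -/
noncomputable def beta [LinearOrder α] (M : Matroid α) : ℕ :=
  {B : Set α | UIntBase M B}.ncard

/-- `β*(M)` : the number of uniactive external bases. -/
noncomputable def betaStar [LinearOrder α] (M : Matroid α) : ℕ :=
  {B : Set α | UExtBase M B}.ncard

/-- A connected matroid : any two elements of the ground set lie on a common circuit. -/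
def Conn (M : Matroid α) : Prop :=
  M.E.Nonempty ∧ ∀ ⦃x y⦄, x ∈ M.E → y ∈ M.E →
    (x = y ∨ ∃ C, Cct M C ∧ x ∈ C ∧ y ∈ C)

/-- A matroid consisting of a single loop. -/
def IsLoopMatroid (M : Matroid α) : Prop := ∃ e, M.E = {e} ∧ M.Dep {e}

/-- A matroid consisting of a single coloop (isthmus). -/
def IsColoopMatroid (M : Matroid α) : Prop := ∃ e, M.E = {e} ∧ M.Indep {e}

/-- A flat : a subset of the ground set whose complement is a union of cocircuits. -/
def IsFlat (M : Matroid α) (F : Set α) : Prop :=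
  F ⊆ M.E ∧ ∃ S : Set (Set α), (∀ C ∈ S, Cocct M C) ∧ M.E \ F = ⋃₀ S

/-- A dual-flat : a union of circuits. -/
def IsDualFlat (M : Matroid α) (F : Set α) : Prop :=
  ∃ S : Set (Set α), (∀ C ∈ S, Cct M C) ∧ F = ⋃₀ S

/-- A cyclic flat : both a flat and a dual-flat. -/
def IsCyclicFlat (M : Matroid α) (F : Set α) : Prop :=
  IsFlat M F ∧ IsDualFlat M F

/-- The data of a filtration : `∅ = F'_ε ⊂ ⋯ ⊂ F'_0 = F_c = F_0 ⊂ ⋯ ⊂ F_ι = E`. -/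
structure Filtration (α : Type*) where
  ι : ℕ
  ε : ℕ
  F : Fin (ι + 1) → Set α
  F' : Fin (ε + 1) → Set α

/-- The `k`-th internal minor `M(F_k)/F_{k-1}` induced by a filtration. -/
def intMinor (M : Matroid α) (f : Filtration α) (k : Fin f.ι) : Matroid α :=
  minor M (f.F k.succ) (f.F k.castSucc)

/-- The `k`-th external minor `M(F'_{k-1})/F'_k` induced by a filtration. -/
def extMinor (M : Matroid α) (f : Filtration α) (k : Fin f.ε) : Matroid α :=
  minor M (f.F' k.castSucc) (f.F' k.succ)

/-- The filtration property : strictly nested subsets from `∅` to `M.E` through `F_c`,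
with the minima of the successive differences increasing on each side of `F_c`. -/
def IsFiltration [LinearOrder α] (M : Matroid α) (f : Filtration α) : Prop :=
  f.F' (Fin.last f.ε) = ∅ ∧
  f.F' 0 = f.F 0 ∧
  f.F (Fin.last f.ι) = M.E ∧
  (∀ k : Fin f.ι, f.F k.castSucc ⊂ f.F k.succ) ∧
  (∀ k : Fin f.ε, f.F' k.succ ⊂ f.F' k.castSucc) ∧
  (∀ j k : Fin f.ι, j < k → ∀ a b : α,
    IsLeast (f.F j.succ \ f.F j.castSucc) a →
    IsLeast (f.F k.succ \ f.F k.castSucc) b → a < b) ∧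
  (∀ j k : Fin f.ε, j < k → ∀ a b : α,
    IsLeast (f.F' j.castSucc \ f.F' j.succ) a →
    IsLeast (f.F' k.castSucc \ f.F' k.succ) b → a < b)

/-- A connected filtration : a filtration all of whose induced internal minors are
connected and not single loops, and all of whose induced external minors are connected
and not single coloops. -/
def IsConnFiltration [LinearOrder α] (M : Matroid α) (f : Filtration α) : Prop :=
  IsFiltration M f ∧
  (∀ k : Fin f.ι, Conn (intMinor M f k) ∧ ¬ IsLoopMatroid (intMinor M f k)) ∧
  (∀ k : Fin f.ε, Conn (extMinor M f k) ∧ ¬ IsColoopMatroid (extMinor M f k))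

/-- An active filtration of a base `B` : a filtration such that `B` induces a uniactive
internal base of each internal minor and a uniactive external base of each external minor. -/
def IsActiveFiltration [LinearOrder α] (M : Matroid α) (B : Set α) (f : Filtration α) : Prop :=
  IsFiltration M f ∧
  (∀ k : Fin f.ι, UIntBase (intMinor M f k) (B ∩ (f.F k.succ \ f.F k.castSucc))) ∧
  (∀ k : Fin f.ε, UExtBase (extMinor M f k) (B ∩ (f.F' k.castSucc \ f.F' k.succ)))

/-- The subset `F(X)` attached to a base `B` and a set `X` of internally active elements :
`B ∩ F` is a base of `M(F)`, the activities of the induced bases of `M(F)` and `M/F`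
split those of `B`, with `Int` of the contraction part equal to `X`. -/
def DecompSet [LinearOrder α] (M : Matroid α) (B X F : Set α) : Prop :=
  F ⊆ M.E ∧
  (M ↾ F).IsBase (B ∩ F) ∧
  ActInt (M ↾ F) (B ∩ F) = ActInt M B \ X ∧
  ActExt (M ↾ F) (B ∩ F) = ActExt M B ∧
  ActInt (con M F) (B \ F) = X ∧
  ActExt (con M F) (B \ F) = ∅

/-- The dual of a filtration : complement every subset and exchange the two sides. -/
def dualFil (M : Matroid α) (f : Filtration α) : Filtration α :=
  ⟨f.ε, f.ι, fun k => M.E \ f.F' k, fun k => M.E \ f.F k⟩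

/-- The set of subsets occurring in a filtration. -/
def termsOf (f : Filtration α) : Set (Set α) :=
  {H | ∃ k, f.F k = H} ∪ {H | ∃ k, f.F' k = H}

end ActiveBij

/-! If `B ∩ R` is a base of `M(R)`, the fundamental circuits of `B ∩ R` in `M(R)` are those
of `B` in `M`, and its fundamental cocircuits are those of `B` cut down to `R`; dually for `B \ W`
in `M/W`. So the activities of `B` in these minors are read off from its activities in `M`, and
everything reduces to the inclusion `F(X) ⊆ F(Y)` for `Y ⊆ X`, proved by looking at the least
element of `F(X) \ F(Y)`. Given that inclusion, the conditions for `F(X)` relative to `B ∩ F(Y)`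
follow by set algebra from `M(F(Y))/F(X) = (M/F(X))(F(Y) \ F(X))`. -/

namespace Matroid

variable {α : Type*} {M : Matroid α} {B I J R W : Set α} {e b : α}

lemma Indep.fundCircuit_eq_of_subset (hJ : M.Indep J) (hIJ : I ⊆ J) (he : e ∈ M.closure I)
    (heJ : e ∉ J) : M.fundCircuit e I = M.fundCircuit e J :=
  ((hJ.subset hIJ).fundCircuit_isCircuit he fun heI ↦ heJ (hIJ heI)).eq_fundCircuit_of_subset hJ
    ((M.fundCircuit_subset_insert e I).trans (insert_subset_insert hIJ))

lemma IsBase.contract_isBase_sdiff (hB : M.IsBase B) (hW : M.IsBasis (B ∩ W) W) :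
    (M ／ W).IsBase (B \ W) := by
  have h := hB.isBasis_ground.contract_isBasis hW (by rw [sdiff_union_inter]; exact hB.indep)
  rwa [← contract_ground, isBasis_ground_iff] at h

lemma IsBase.fundCircuit_restrict_inter (hB : M.IsBase B) (hR : M.IsBasis (B ∩ R) R)
    (he : e ∈ R \ B) : (M ↾ R).fundCircuit e (B ∩ R) = M.fundCircuit e B := by
  rw [fundCircuit_restrict inter_subset_right he.1 hR.subset_ground]
  exact hB.indep.fundCircuit_eq_of_subset inter_subset_left (hR.subset_closure he.1) he.2

lemma IsBase.fundCircuit_contract (hB : M.IsBase B) (hW : M.IsBasis (B ∩ W) W)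
    (he : e ∈ M.E \ (B ∪ W)) : (M ／ W).fundCircuit e (B \ W) = M.fundCircuit e B \ W := by
  obtain ⟨heE, heBW⟩ := he
  have heB : e ∉ B := fun h ↦ heBW (Or.inl h)
  have heW : e ∉ W := fun h ↦ heBW (Or.inr h)
  have hBW := hB.contract_isBase_sdiff hW
  have hecl : e ∈ (M ／ W).closure (B \ W) := by
    rw [hBW.closure_eq, contract_ground]; exact ⟨heE, heW⟩
  ext x
  by_cases hxW : x ∈ W
  · simp only [mem_sdiff, hxW, not_true_eq_false, and_false, iff_false]
    intro hx
    obtain rfl | hxB := (M ／ W).fundCircuit_subset_insert e (B \ W) hx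
    exacts [heW hxW, hxB.2 hxW]
  have hunion : insert e (B \ W) \ {x} ∪ B ∩ W = insert e B \ {x} := by
    ext y
    simp only [mem_union, mem_sdiff, mem_insert_iff, mem_inter_iff, mem_singleton_iff]
    by_cases hyW : y ∈ W <;> grind
  have hdisj : Disjoint W (insert e (B \ W) \ {x}) :=
    disjoint_left.2 fun y hyW hy ↦ hy.1.elim (fun h ↦ heW (h ▸ hyW)) fun h ↦ h.2 hyW
  rw [hBW.indep.mem_fundCircuit_iff hecl fun h ↦ heB h.1, hW.contract_indep_iff, hunion,
    and_iff_left hdisj, mem_sdiff, and_iff_left hxW,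
    hB.indep.mem_fundCircuit_iff (by rwa [hB.closure_eq]) heB]

lemma IsBase.fundCocircuit_contract (hB : M.IsBase B) (hW : M.IsBasis (B ∩ W) W)
    (hb : b ∈ B \ W) : (M ／ W).fundCocircuit b (B \ W) = M.fundCocircuit b B := by
  have hground : (M ／ W)✶.E \ (B \ W) = (M.E \ B) ∩ (M.E \ W) := by
    rw [dual_ground, contract_ground]; tauto_set
  rw [fundCocircuit, hground, dual_contract, delete_eq_restrict, dual_ground,
    hB.compl_isBase_dual.fundCircuit_restrict_inter (hB.compl_inter_isBasis_of_inter_isBasis hW)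
      ⟨⟨hB.subset_ground hb.1, hb.2⟩, fun h ↦ h.2 hb.1⟩]
  rfl

lemma IsBase.fundCocircuit_restrict_inter (hB : M.IsBase B) (hR : M.IsBasis (B ∩ R) R)
    (hb : b ∈ B ∩ R) : (M ↾ R).fundCocircuit b (B ∩ R) = M.fundCocircuit b B ∩ R := by
  have hRE := hR.subset_ground
  have hground : (M ↾ R)✶.E \ (B ∩ R) = (M.E \ B) \ (M.E \ R) := by
    rw [dual_ground, restrict_ground_eq]; tauto_set
  have hsub : M.fundCocircuit b B ⊆ M.E :=
    (M.fundCocircuit_subset_insert_compl b B).trans (insert_subset (hRE hb.2) sdiff_subset)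
  rw [fundCocircuit, hground, ← delete_compl hRE, dual_delete,
    hB.compl_isBase_dual.fundCircuit_contract (hB.compl_inter_isBasis_of_inter_isBasis hR)
      ⟨hRE hb.2, by rintro (h | h); exacts [h.2 hb.1, h.2 hb.2]⟩]
  change M.fundCocircuit b B \ (M.E \ R) = _
  tauto_set

end Matroid

namespace ActiveBij

section

variable {α : Type*} {M : Matroid α} {B I R W : Set α} {e b : α}

lemma con_eq_contract (M : Matroid α) (C : Set α) : con M C = M ／ C := rfl

lemma fundCct_eq_fundCircuit (hI : M.Indep I) (he : e ∈ M.closure I) (heI : e ∉ I) :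
    fundCct M I e = M.fundCircuit e I := by
  have hcircuits : {C | Cct M C ∧ C ⊆ insert e I} = {M.fundCircuit e I} :=
    Subset.antisymm (fun _ hC ↦ IsCircuit.eq_fundCircuit_of_subset hC.1 hI hC.2) <|
      singleton_subset_iff.2 ⟨hI.fundCircuit_isCircuit he heI, M.fundCircuit_subset_insert e I⟩
  rw [fundCct, hcircuits, sInter_singleton]

lemma fundCocct_eq_fundCocircuit (hB : M.IsBase B) (hb : b ∈ B) :
    fundCocct M B b = M.fundCocircuit b B :=
  fundCct_eq_fundCircuit hB.compl_isBase_dual.indep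
    (by rw [hB.compl_isBase_dual.closure_eq]; exact hB.subset_ground hb) fun h ↦ h.2 hb

section Activity

variable [LinearOrder α]

lemma actInt_eq (hB : M.IsBase B) : ActInt M B = {b ∈ B | IsLeast (M.fundCocircuit b B) b} := by
  ext b
  exact and_congr_right fun hb ↦ by rw [fundCocct_eq_fundCocircuit hB hb]

lemma actExt_eq (hB : M.IsBase B) :
    ActExt M B = {e ∈ M.E \ B | IsLeast (M.fundCircuit e B) e} := by
  ext e
  exact and_congr_right fun he ↦ by
    rw [fundCct_eq_fundCircuit hB.indep (by rw [hB.closure_eq]; exact he.1) he.2]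

lemma actInt_contract (hB : M.IsBase B) (hW : M.IsBasis (B ∩ W) W) :
    ActInt (M ／ W) (B \ W) = ActInt M B \ W := by
  rw [actInt_eq hB, actInt_eq (hB.contract_isBase_sdiff hW)]
  ext b
  by_cases hb : b ∈ B \ W
  · simp [hb.1, hb.2, hB.fundCocircuit_contract hW hb]
  · exact iff_of_false (fun h ↦ hb h.1) fun h ↦ hb ⟨h.1.1, h.2⟩

lemma actExt_restrict (hB : M.IsBase B) (hR : M.IsBasis (B ∩ R) R) :
    ActExt (M ↾ R) (B ∩ R) = ActExt M B ∩ R := by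
  rw [actExt_eq hB, actExt_eq hR.restrict_isBase]
  ext e
  by_cases he : e ∈ R \ B
  · simp [he.1, he.2, hR.subset_ground he.1, hB.fundCircuit_restrict_inter hR he]
  · exact iff_of_false (fun h ↦ he ⟨h.1.1, fun heB ↦ h.1.2 ⟨heB, h.1.1⟩⟩)
      fun h ↦ he ⟨h.2, h.1.1.2⟩

end Activity

section DecompSet

variable [LinearOrder α] {X Y F FX FY : Set α}

lemma DecompSet.isBasis (h : DecompSet M B X F) : M.IsBasis (B ∩ F) F :=
  (isBase_restrict_iff h.1).1 h.2.1

lemma DecompSet.eq_actInt_sdiff (hB : M.IsBase B) (h : DecompSet M B X F) :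
    X = ActInt M B \ F := by
  rw [← h.2.2.2.2.1, con_eq_contract, actInt_contract hB h.isBasis]

/-- The least element `m` of `F(X) \ F(Y)` is not internally active in `M`. If `m ∈ B`, its
fundamental cocircuit avoids `F(Y)`, so `m` would be internally active in `M(F(X))`; if `m ∉ B`,
its fundamental circuit lies in `F(X)`, so `m` would be externally active in `M/F(Y)`. -/
lemma DecompSet.subset_of_subset [M.Finite] (hB : M.IsBase B) (hFX : DecompSet M B X FX)
    (hFY : DecompSet M B Y FY) (hYX : Y ⊆ X) : FX ⊆ FY := by
  by_contra hsub
  obtain ⟨m, hmD, hmin⟩ := exists_min_image (FX \ FY) id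
    (M.ground_finite.subset (sdiff_subset.trans hFX.1)) (sdiff_nonempty.2 hsub)
  have hm : IsLeast (FX \ FY) m := ⟨hmD, hmin⟩
  have hmA : m ∉ ActInt M B := fun h ↦ by
    have hmX := hYX ((hFY.eq_actInt_sdiff hB).symm ▸ ⟨h, hmD.2⟩ : m ∈ Y)
    exact (hFX.eq_actInt_sdiff hB ▸ hmX : m ∈ ActInt M B \ FX).2 hmD.1
  have least_of_subset {S : Set α} (hmS : m ∈ S) (hS : S ⊆ FX \ FY) : IsLeast S m :=
    ⟨hmS, fun _ hc ↦ hm.2 (hS hc)⟩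
  have hmE : m ∈ M.E := hFX.1 hmD.1
  by_cases hmB : m ∈ B
  · have hcocircuit : M.fundCocircuit m B ⊆ M.E \ FY := by
      rw [← hB.fundCocircuit_contract hFY.isBasis ⟨hmB, hmD.2⟩]
      exact ((M ／ FY).fundCocircuit_subset_insert_compl m (B \ FY)).trans
        (insert_subset ⟨hmE, hmD.2⟩ sdiff_subset)
    have hact : m ∈ ActInt (M ↾ FX) (B ∩ FX) := by
      rw [actInt_eq hFX.2.1, mem_sep_iff,
        hB.fundCocircuit_restrict_inter hFX.isBasis ⟨hmB, hmD.1⟩]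
      exact ⟨⟨hmB, hmD.1⟩, least_of_subset ⟨M.mem_fundCocircuit m B, hmD.1⟩
        fun c hc ↦ ⟨hc.2, (hcocircuit hc.1).2⟩⟩
    rw [hFX.2.2.1] at hact
    exact hmA hact.1
  · have hcircuit : M.fundCircuit m B ⊆ FX := by
      rw [← hB.fundCircuit_restrict_inter hFX.isBasis ⟨hmD.1, hmB⟩]
      exact ((M ↾ FX).fundCircuit_subset_insert m (B ∩ FX)).trans
        (insert_subset hmD.1 inter_subset_right)
    have hact : m ∈ ActExt (M ／ FY) (B \ FY) := by
      rw [actExt_eq (hB.contract_isBase_sdiff hFY.isBasis), mem_sep_iff,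
        hB.fundCircuit_contract hFY.isBasis ⟨hmE, by rintro (h | h); exacts [hmB h, hmD.2 h]⟩]
      exact ⟨⟨⟨hmE, hmD.2⟩, fun h ↦ hmB h.1⟩,
        least_of_subset ⟨M.mem_fundCircuit m B, hmD.2⟩ (sdiff_subset_sdiff_left hcircuit)⟩
    rw [← con_eq_contract, hFY.2.2.2.2.2] at hact
    exact hact

lemma DecompSet.restrict_of_subset (hB : M.IsBase B) (hFX : DecompSet M B X FX)
    (hFY : DecompSet M B Y FY) (hYX : Y ⊆ X) (hF : FX ⊆ FY) :
    DecompSet (M ↾ FY) (B ∩ FY) (X \ Y) FX := by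
  have hres : (M ↾ FY) ↾ FX = M ↾ FX := restrict_restrict_eq M hF
  have hinter : B ∩ FY ∩ FX = B ∩ FX := by rw [inter_assoc, inter_eq_self_of_subset_right hF]
  have hbasis : (M ↾ FY).IsBasis (B ∩ FY ∩ FX) FX := by
    rw [hinter, isBasis_restrict_iff hFY.1]
    exact ⟨hFX.isBasis, hF⟩
  have hsdiff : (B ∩ FY) \ FX = (B \ FX) ∩ (FY \ FX) := by tauto_set
  have hbasis' : (M ／ FX).IsBasis ((B \ FX) ∩ (FY \ FX)) (FY \ FX) := by
    rw [← hsdiff]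
    exact hFY.isBasis.contract_isBasis hFX.isBasis
      (hB.indep.subset (union_subset (sdiff_subset.trans inter_subset_left) inter_subset_left))
  refine ⟨hF, by rw [hres, hinter]; exact hFX.2.1, ?_, ?_, ?_, ?_⟩
  · rw [hres, hinter, hFX.2.2.1, hFY.2.2.1]
    tauto_set
  · rw [hres, hinter, hFX.2.2.2.1, hFY.2.2.2.1]
  · rw [con_eq_contract, actInt_contract hFY.2.1 hbasis, hFY.2.2.1, hFX.eq_actInt_sdiff hB,
      sdiff_sdiff_comm]
  · rw [con_eq_contract, restrict_contract_eq_contract_restrict M hF, hsdiff,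
      actExt_restrict (hB.contract_isBase_sdiff hFX.isBasis) hbasis', ← con_eq_contract,
      hFX.2.2.2.2.2, empty_inter]

end DecompSet

end

/-- The subset `F(X)` can be computed in two steps : if `X = Y ⊎ Z`, then `Z` consists of
internally active elements of the base `B ∩ F(Y)` of `M(F(Y))`, and `F(X)` is obtained by
applying the construction to `Z` relative to this base of the restriction `M(F(Y))`. -/
theorem stmt17 {α : Type*} [LinearOrder α] (M : Matroid α) [M.Finite]
    (B : Set α) (hB : M.IsBase B) (X Y Z : Set α)
    (hX : X ⊆ ActInt M B) (hYZ : X = Y ∪ Z) (hdisj : Disjoint Y Z)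
    (FX FY : Set α) (hFX : DecompSet M B X FX) (hFY : DecompSet M B Y FY) :
    Z ⊆ ActInt (M ↾ FY) (B ∩ FY) ∧
    DecompSet (M ↾ FY) (B ∩ FY) Z FX := by
  have hYX : Y ⊆ X := hYZ ▸ subset_union_left
  have hZ : Z = X \ Y := by rw [hYZ, union_sdiff_left, hdisj.symm.sdiff_eq_left]
  refine ⟨?_, hZ ▸ hFX.restrict_of_subset hB hFY hYX (hFX.subset_of_subset hB hFY hYX)⟩
  rw [hFY.2.2.1]
  exact fun z hz ↦ ⟨hX (hYZ ▸ Or.inr hz), hdisj.notMem_of_mem_right hz⟩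

end ActiveBij
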